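/- arXiv:1704.02130 — 2 statements merged into one kernel-verified Lean document; each statement's English description precedes it below -/
import Mathlib

section
/- If θ ∈ (0, π/4] and β ∈ (0,2) satisfy tan(2θ) = √(2/β² − 1/2), then the maximal quantum value of the tilted-CHSH expression equals I_q = √(8+2β²) = 4/√(1 + sin²(2θ)). -/
open Real

/-- If `tan(2θ) = √(2/β² − 1/2)` with `θ ∈ (0, π/4]` and `β ∈ (0,2)`, then the
maximal quantum value of the tilted-CHSH expression satisfies
`I_q = √(8+2β²) = 4/√(1+sin²(2θ))`. -/
theorem tilted_chsh_quantum_value (θ β : ℝ) (hθ0 : 0 < θ) (hθ : θ ≤ π / 4)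
    (hβ0 : 0 < β) (hβ2 : β < 2)
    (hrel : Real.tan (2 * θ) = Real.sqrt (2 / β ^ 2 - 1 / 2)) :
    Real.sqrt (8 + 2 * β ^ 2) = 4 / Real.sqrt (1 + Real.sin (2 * θ) ^ 2) := by
  set s := Real.sin (2 * θ) with hs
  set c := Real.cos (2 * θ) with hc
  have hpyth : s ^ 2 + c ^ 2 = 1 := Real.sin_sq_add_cos_sq _
  have hβ2' : β ^ 2 < 4 := by nlinarith
  have hβ2pos : 0 < β ^ 2 := by positivity
  have hpos : 0 < 2 / β ^ 2 - 1 / 2 := by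
    rw [sub_pos, div_lt_div_iff₀ (by norm_num) hβ2pos]
    linarith
  have htanpos : 0 < Real.tan (2 * θ) := by
    rw [hrel]; exact Real.sqrt_pos.mpr hpos
  have hc0 : c ≠ 0 := by
    intro h
    rw [Real.tan_eq_sin_div_cos, ← hs, ← hc, h, div_zero] at htanpos
    exact lt_irrefl 0 htanpos
  have htan2 : s ^ 2 / c ^ 2 = 2 / β ^ 2 - 1 / 2 := by
    have := congrArg (· ^ 2) hrel
    simp only [Real.tan_eq_sin_div_cos, ← hs, ← hc, div_pow] at this
    rw [this, Real.sq_sqrt hpos.le]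
  have hkey : (8 + 2 * β ^ 2) * (1 + s ^ 2) = 16 := by
    have h1 : s ^ 2 * (β ^ 2 * 2) = (2 * 2 - β ^ 2) * c ^ 2 := by
      field_simp at htan2
      linarith
    nlinarith
  have h1s : 0 < 1 + s ^ 2 := by positivity
  have hsq : Real.sqrt (1 + s ^ 2) ≠ 0 := by positivity
  rw [eq_div_iff hsq, ← Real.sqrt_mul (by positivity), hkey]
  rw [show (16 : ℝ) = 4 ^ 2 by norm_num]
  exact Real.sqrt_sq (by norm_num)
end

section
/- Let λ_θ, λ_c satisfy 0 < λ_c < λ_θ < 1, set θ(n) = n^{−λ_θ/16}, δ(n) = S(θ(n))·n^{λ_c/8} with S(θ) = h₂(sin²θ), and m(n) = n(S(θ(n)) + δ(n)). Then m(n) ∼ (λ_θ/8) n^{k'} log₂ n as n → ∞ with k' = 1 − (λ_θ − λ_c)/8 ∈ (7/8, 1) when λ_θ ∈ (0,1); in particular m(n)/n → 0 and n > m(n) for large n. -/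
/-!
Near `p = 0` the binary entropy is dominated by its `p log p⁻¹` term, since the other term
`(1 - p) log (1 - p)⁻¹` is smooth and vanishes at `0`, hence is `O(p)`. As `sin θ ~ θ` and
`log ∘ inv` respects equivalence of functions tending to `0⁺`, `S(θ) ~ θ² log₂ θ⁻²`.
Substituting `θ = n^{-λ_θ/16}` and `1 + n^{λ_c/8} ~ n^{λ_c/8}` gives the equivalence for `m`,
and since `k' < 1` the right-hand side is `o(n)`.
-/

open Filter

/-- Binary entropy with logarithm base 2. -/
noncomputable def binEnt2 (p : ℝ) : ℝ :=
  -p * Real.logb 2 p - (1 - p) * Real.logb 2 (1 - p)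

open Real Topology Asymptotics

theorem binEnt2_eq_binEntropy_div_log_two (p : ℝ) : binEnt2 p = binEntropy p / log 2 := by
  simp only [binEnt2, binEntropy, logb, log_inv]
  ring

theorem Asymptotics.IsEquivalent.log_inv {α : Type*} {l : Filter α} {f g : α → ℝ}
    (hfg : f ~[l] g) (hg : Tendsto g l (𝓝[>] 0)) :
    (fun x => Real.log (f x)⁻¹) ~[l] fun x => Real.log (g x)⁻¹ :=
  hfg.inv.log (tendsto_inv_nhdsGT_zero.comp hg)

theorem binEntropy_isEquivalent_nhdsGT_zero : binEntropy ~[𝓝[>] 0] fun p => p * log p⁻¹ := by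
  have hdiff : DifferentiableAt ℝ (fun p : ℝ => (1 - p) * log (1 - p)⁻¹) 0 := by
    fun_prop (disch := norm_num)
  have hlin : (fun p : ℝ => (1 - p) * log (1 - p)⁻¹) =O[𝓝[>] 0] fun p => p := by
    simpa using hdiff.isBigO_sub.mono nhdsWithin_le_nhds
  have hlog : Tendsto (fun p : ℝ => log p⁻¹) (𝓝[>] 0) atTop :=
    tendsto_log_atTop.comp tendsto_inv_nhdsGT_zero
  have hp : (fun p : ℝ => p) =o[𝓝[>] 0] fun p => p * log p⁻¹ := by
    simpa using (isBigO_refl (fun p : ℝ => p) _).mul_isLittleO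
      ((isLittleO_one_left_iff ℝ).mpr (tendsto_norm_atTop_atTop.comp hlog))
  exact (IsEquivalent.refl.add_isLittleO (hlin.trans_isLittleO hp) :)

theorem Asymptotics.IsEquivalent.binEntropy {α : Type*} {l : Filter α} {f g : α → ℝ}
    (hfg : f ~[l] g) (hg : Tendsto g l (𝓝[>] 0)) :
    (fun x => binEntropy (f x)) ~[l] fun x => g x * Real.log (g x)⁻¹ := by
  have hf : Tendsto f l (𝓝[>] 0) :=
    tendsto_nhdsWithin_iff.mpr ⟨hfg.symm.tendsto_nhds (tendsto_nhdsWithin_iff.mp hg).1,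
      hfg.eventually_pos (tendsto_nhdsWithin_iff.mp hg).2⟩
  exact (binEntropy_isEquivalent_nhdsGT_zero.comp_tendsto hf).trans (hfg.mul (hfg.log_inv hg))

theorem binEnt2_sin_sq_isEquivalent :
    (fun θ => binEnt2 (sin θ ^ 2)) ~[𝓝[>] 0] fun θ => θ ^ 2 * logb 2 (θ ^ 2)⁻¹ := by
  have hsin : (fun θ => sin θ ^ 2) ~[𝓝[>] 0] fun θ => θ ^ 2 :=
    (isEquivalent_sin.mono nhdsWithin_le_nhds).pow 2
  have hsq : Tendsto (fun θ : ℝ => θ ^ 2) (𝓝[>] 0) (𝓝[>] 0) := by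
    refine tendsto_nhdsWithin_iff.mpr
      ⟨?_, eventually_nhdsWithin_of_forall fun θ hθ => Set.mem_Ioi.mpr (pow_pos hθ 2)⟩
    exact ((continuous_pow 2).tendsto' (0 : ℝ) 0 (zero_pow two_ne_zero)).mono_left
      nhdsWithin_le_nhds
  convert (hsin.binEntropy hsq).div (IsEquivalent.refl (u := fun _ => log 2)) using 1 <;> ext θ
  · exact binEnt2_eq_binEntropy_div_log_two _
  · exact (mul_div_assoc _ _ _).symm

theorem binEnt2_sin_sq_rpow_neg_isEquivalent {a : ℝ} (ha : 0 < a) :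
    (fun x : ℝ => binEnt2 (sin (x ^ (-a)) ^ 2)) ~[atTop]
      fun x => 2 * a * x ^ (-(2 * a)) * logb 2 x := by
  have hθ : Tendsto (fun x : ℝ => x ^ (-a)) atTop (𝓝[>] 0) :=
    tendsto_nhdsWithin_iff.mpr ⟨tendsto_rpow_neg_atTop ha,
      (eventually_gt_atTop 0).mono fun x hx => rpow_pos_of_pos hx _⟩
  refine (binEnt2_sin_sq_isEquivalent.comp_tendsto hθ).congr_right ?_
  filter_upwards [eventually_gt_atTop 0] with x hx
  have hsq : (x ^ (-a)) ^ 2 = x ^ (-(2 * a)) := by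
    rw [← rpow_natCast, ← rpow_mul hx.le]; ring_nf
  simp only [Function.comp_apply, hsq, ← rpow_neg hx.le, neg_neg, logb_rpow_eq_mul_logb_of_pos hx]
  ring

theorem one_add_rpow_isEquivalent {c : ℝ} (hc : 0 < c) :
    (fun x : ℝ => 1 + x ^ c) ~[atTop] fun x => x ^ c :=
  IsEquivalent.refl.const_add_of_norm_tendsto_atTop
    (tendsto_norm_atTop_atTop.comp (tendsto_rpow_atTop hc))

theorem singlet_consumption_isEquivalent {a c : ℝ} (ha : 0 < a) (hc : 0 < c) :
    (fun x : ℝ => x * (binEnt2 (sin (x ^ (-a)) ^ 2) + binEnt2 (sin (x ^ (-a)) ^ 2) * x ^ c))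
      ~[atTop] fun x => 2 * a * x ^ (1 - 2 * a + c) * logb 2 x := by
  have h := ((IsEquivalent.refl (u := fun x : ℝ => x)).mul
    (binEnt2_sin_sq_rpow_neg_isEquivalent ha)).mul (one_add_rpow_isEquivalent hc)
  refine (h.congr_left (Eventually.of_forall fun x => ?_)).congr_right ?_
  · simp only [Pi.mul_apply]
    ring
  · filter_upwards [eventually_gt_atTop 0] with x hx
    rw [Pi.mul_apply, Pi.mul_apply, show 1 - 2 * a + c = 1 + -(2 * a) + c by ring,
      rpow_add hx, rpow_add hx, rpow_one]
    ring

theorem isLittleO_rpow_mul_logb_self {k : ℝ} (hk : k < 1) (b : ℝ) :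
    (fun x : ℝ => x ^ k * logb b x) =o[atTop] fun x => x := by
  refine ((isBigO_refl (fun x : ℝ => x ^ k) atTop).mul_isLittleO
    ((isLittleO_log_rpow_atTop (sub_pos.mpr hk)).const_mul_left (log b)⁻¹)).congr'
    (Eventually.of_forall fun x => by simp only [logb, inv_mul_eq_div]) ?_
  filter_upwards [eventually_gt_atTop 0] with x hx
  rw [← rpow_add hx, add_sub_cancel, rpow_one]

/-- Asymptotics of singlet consumption in the diluted protocol (Corollary 3):
with `θ(n) = n^{−λ_θ/16}`, `S(θ) = h₂(sin²θ)`, `δ(n) = S(θ(n))·n^{λ_c/8}` and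
`m(n) = n(S(θ(n)) + δ(n))`, one has `m(n) ∼ (λ_θ/8)·n^{k'}·log₂ n` with
`k' = 1 − (λ_θ − λ_c)/8 ∈ (7/8, 1)`; in particular `m(n)/n → 0` and
`m(n) < n` for all large `n`. -/
theorem diluted_singlet_consumption (lθ lc : ℝ)
    (hlc0 : 0 < lc) (hlclθ : lc < lθ) (hlθ1 : lθ < 1) :
    let S : ℕ → ℝ := fun n => binEnt2 (Real.sin ((n : ℝ) ^ (-(lθ / 16))) ^ 2)
    let m : ℕ → ℝ := fun n => (n : ℝ) * (S n + S n * (n : ℝ) ^ (lc / 8))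
    let k' : ℝ := 1 - (lθ - lc) / 8
    (7 / 8 < k' ∧ k' < 1) ∧
    Tendsto (fun n : ℕ => m n / ((lθ / 8) * (n : ℝ) ^ k' * Real.logb 2 (n : ℝ)))
      atTop (nhds 1) ∧
    Tendsto (fun n : ℕ => m n / (n : ℝ)) atTop (nhds 0) ∧
    ∀ᶠ n : ℕ in atTop, m n < (n : ℝ) := by
  intro S m k'
  have hk' : 7 / 8 < k' ∧ k' < 1 := by constructor <;> simp only [k'] <;> linarith
  have hm : m ~[atTop] fun n : ℕ => lθ / 8 * (n : ℝ) ^ k' * logb 2 n := by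
    refine ((singlet_consumption_isEquivalent (a := lθ / 16) (c := lc / 8) (by linarith)
      (by linarith)).comp_tendsto tendsto_natCast_atTop_atTop).congr_right
      (Eventually.of_forall fun n => ?_)
    simp only [Function.comp_apply, k']
    ring_nf
  have hmo : m =o[atTop] fun n : ℕ => (n : ℝ) :=
    hm.trans_isLittleO <| (((isLittleO_rpow_mul_logb_self hk'.2 2).const_mul_left
      (lθ / 8)).comp_tendsto tendsto_natCast_atTop_atTop).congr_left fun n => (mul_assoc ..).symm
  have hD : ∀ᶠ n : ℕ in atTop, lθ / 8 * (n : ℝ) ^ k' * logb 2 n ≠ 0 := by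
    filter_upwards [eventually_ge_atTop 2] with n hn
    have hn1 : (1 : ℝ) < n := by exact_mod_cast hn
    exact (mul_pos (mul_pos (by linarith) (rpow_pos_of_pos (by linarith) _))
      (logb_pos one_lt_two hn1)).ne'
  refine ⟨hk', (isEquivalent_iff_tendsto_one hD).mp hm, hmo.tendsto_div_nhds_zero, ?_⟩
  filter_upwards [hmo.bound one_half_pos, eventually_gt_atTop 0] with n hbound hn
  have hn' : (0 : ℝ) < n := by exact_mod_cast hn
  rw [Real.norm_eq_abs, Real.norm_natCast] at hbound
  linarith [le_abs_self (m n)]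
end
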